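/- arXiv:1901.09832 — 7 statements merged into one kernel-verified Lean document; each statement's English description precedes it below -/
import Mathlib

section
/- Let N > 5040 be an integer and p its largest prime factor, appearing in N with exponent 1. If p ≥ log N, then G(N) < G(N/p), where G(n) = σ(n)/(n · log log n). -/
/-!
Write `N = M p` with `p ∤ M`. Then `σ(N) = (p + 1) σ(M)`, so `G(N) < G(M)` amounts to
`(p + 1) log log M < p log log N`. Concavity of `log` gives
`log log N - log log M ≥ log p / log N ≥ log p / p` (using `p ≥ log N`), while
`log log M < log log N ≤ log p`; together these give the scalar inequality.
-/

/-- `G n = σ(n) / (n * log log n)`. -/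
noncomputable def G (n : ℕ) : ℝ :=
  (∑ d ∈ n.divisors, (d : ℝ)) / (n * Real.log (Real.log n))

open Real

theorem Nat.sum_divisors_mul_prime {M p : ℕ} (hp : p.Prime) (hpM : ¬ p ∣ M) :
    ∑ d ∈ (M * p).divisors, (d : ℝ) = (∑ d ∈ M.divisors, (d : ℝ)) * (p + 1) := by
  have hcop : M.Coprime p := ((Nat.Prime.coprime_iff_not_dvd hp).mpr hpM).symm
  have h := hcop.sum_divisors_mul
  rw [hp.divisors, Finset.sum_pair hp.one_lt.ne] at h
  rw [← Nat.cast_sum, ← Nat.cast_sum, h]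
  push_cast
  ring

theorem Real.div_add_le_log_add_sub_log {a b : ℝ} (ha : 0 < a) (hb : 0 ≤ b) :
    b / (a + b) ≤ log (a + b) - log a := by
  have hab : 0 < a + b := by linarith
  have h := log_le_sub_one_of_pos (div_pos ha hab)
  rw [log_div ha.ne' hab.ne'] at h
  have : a / (a + b) - 1 = -(b / (a + b)) := by field_simp; ring
  linarith

theorem Real.add_one_mul_log_log_lt {m q : ℝ} (hm : exp 1 < m) (hq : 1 < q)
    (hmq : log (m * q) ≤ q) : (q + 1) * log (log m) < q * log (log (m * q)) := by
  have hm0 : 0 < m := (exp_pos 1).trans hm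
  have ha : 1 < log m := by rwa [lt_log_iff_exp_lt hm0]
  have hb : 0 < log q := log_pos hq
  rw [log_mul hm0.ne' (by positivity)] at hmq ⊢
  have hgap : log q ≤ q * (log (log m + log q) - log (log m)) :=
    calc log q = q * (log q / q) := by field_simp
      _ ≤ q * (log q / (log m + log q)) := by gcongr
      _ ≤ q * (log (log m + log q) - log (log m)) := by
        gcongr; exact div_add_le_log_add_sub_log (by linarith) hb.le
  have hlog : log (log m) < log q :=
    calc log (log m) < log (log m + log q) := log_lt_log (by linarith) (by linarith)
      _ ≤ log q := log_le_log (by linarith) hmq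
  linarith

theorem G_mul_prime_lt {M p : ℕ} (hp : p.Prime) (hpM : ¬ p ∣ M) (hM : exp 1 < M)
    (hlog : log (M * p) ≤ p) : G (M * p) < G M := by
  have hM0 : (0 : ℝ) < M := (exp_pos 1).trans hM
  have hp1 : (1 : ℝ) < p := by exact_mod_cast hp.one_lt
  have hLM : 0 < log (log M) := log_pos (by rwa [lt_log_iff_exp_lt hM0])
  have hscalar := add_one_mul_log_log_lt hM hp1 hlog
  have hLN : 0 < log (log (M * p)) := by nlinarith
  have hσ : 0 < ∑ d ∈ M.divisors, (d : ℝ) :=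
    Finset.sum_pos (fun d hd => by exact_mod_cast Nat.pos_of_mem_divisors hd)
      ⟨M, Nat.mem_divisors_self M (by exact_mod_cast hM0.ne')⟩
  unfold G
  rw [Nat.sum_divisors_mul_prime hp hpM, Nat.cast_mul,
    div_lt_div_iff₀ (by positivity) (by positivity)]
  nlinarith [mul_pos (mul_pos hσ hM0) (sub_pos.mpr hscalar)]

theorem stmt_0_general (N p : ℕ) (hp : p.Prime) (hpN : p ∣ N)
    (hp1 : ¬ p ^ 2 ∣ N)
    (hNp : (N / p : ℝ) > Real.exp 1) (hge : (p : ℝ) ≥ Real.log N) :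
    G N < G (N / p) := by
  obtain ⟨M, rfl⟩ := hpN
  have hpR : (p : ℝ) ≠ 0 := by exact_mod_cast hp.ne_zero
  rw [Nat.mul_div_cancel_left M hp.pos, mul_comm]
  push_cast at hNp hge
  rw [mul_div_cancel_left₀ _ hpR] at hNp
  refine G_mul_prime_lt hp (fun ⟨k, hk⟩ => hp1 ⟨k, by rw [hk]; ring⟩) hNp ?_
  rwa [mul_comm]

theorem stmt_0 (N p : ℕ) (hN : N > 5040) (hp : p.Prime) (hpN : p ∣ N)
    (hp1 : ¬ p ^ 2 ∣ N) (hmax : ∀ q : ℕ, q.Prime → q ∣ N → q ≤ p)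
    (hNp : (N / p : ℝ) > Real.exp 1) (hge : (p : ℝ) ≥ Real.log N) :
    G N < G (N / p) :=
  stmt_0_general N p hp hpN hp1 hNp hge
end

section
/- Let N > 5040 be an integer and let p be a prime with p < log N that does not divide N. Then G(N) < G(Np), where G(n) = σ(n)/(n · log log n). -/
theorem Nat.Prime.sum_divisors_mul_of_not_dvd {N p : ℕ} (hp : p.Prime) (hpN : ¬ p ∣ N) :
    ∑ d ∈ (N * p).divisors, d = (∑ d ∈ N.divisors, d) * (p + 1) := by
  rw [Nat.Coprime.sum_divisors_mul ((hp.coprime_iff_not_dvd.mpr hpN).symm), hp.divisors,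
    Finset.sum_pair hp.one_lt.ne, add_comm 1 p]

namespace Real

theorem log_add_le_log_add_div {x y : ℝ} (hx : 0 < x) (hxy : 0 < x + y) :
    log (x + y) ≤ log x + y / x := by
  have h := log_le_sub_one_of_pos (div_pos hxy hx)
  rw [log_div hxy.ne' hx.ne', add_div, div_self hx.ne', add_sub_cancel_left] at h
  linarith

theorem mul_log_log_mul_lt {x q : ℝ} (hq : 1 < q) (hqx : q < log x) :
    q * log (log (x * q)) < (q + 1) * log (log x) := by
  have hlogq : 0 < log q := log_pos hq
  have hlogx : 0 < log x := by linarith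
  have hx : x ≠ 0 := by rintro rfl; simp at hlogx
  have hlogq_lt : log q < log (log x) := log_lt_log (by linarith) hqx
  have hconcave : log (log (x * q)) ≤ log (log x) + log q / log x := by
    rw [log_mul hx (by positivity)]
    exact log_add_le_log_add_div hlogx (by positivity)
  have hsmall : q * (log q / log x) < log q := by
    rw [mul_div_left_comm]
    exact mul_lt_of_lt_one_right hlogq ((div_lt_one hlogx).mpr hqx)
  calc q * log (log (x * q)) ≤ q * (log (log x) + log q / log x) := by gcongr
    _ < (q + 1) * log (log x) := by linarith

end Real

theorem stmt_1_general (N p : ℕ) (hp : p.Prime) (hpN : ¬ p ∣ N)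
    (hlt : (p : ℝ) < Real.log N) :
    G N < G (N * p) := by
  have hp1 : (1 : ℝ) < p := by exact_mod_cast hp.one_lt
  have hlogN : 1 < Real.log N := hp1.trans hlt
  have hN : (0 : ℝ) < N := by
    rcases N.eq_zero_or_pos with rfl | h
    · simp at hlogN; linarith
    · exact_mod_cast h
  have hσ : (0 : ℝ) < ∑ d ∈ N.divisors, (d : ℝ) :=
    Finset.sum_pos (fun d hd => Nat.cast_pos.mpr (Nat.pos_of_mem_divisors hd))
      ⟨1, Nat.one_mem_divisors.mpr (Nat.cast_pos.mp hN).ne'⟩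
  have hlogNp : 0 < Real.log (Real.log (N * p)) :=
    Real.log_pos (hlogN.trans_le (Real.log_le_log hN (le_mul_of_one_le_right hN.le hp1.le)))
  have hσNp : ∑ d ∈ (N * p).divisors, (d : ℝ) = (∑ d ∈ N.divisors, (d : ℝ)) * (p + 1) := by
    simpa using congrArg ((↑) : ℕ → ℝ) (hp.sum_divisors_mul_of_not_dvd hpN)
  have hmain := Real.mul_log_log_mul_lt hp1 hlt
  unfold G
  rw [hσNp]
  push_cast
  rw [div_lt_div_iff₀ (by have := Real.log_pos hlogN; positivity) (by positivity)]
  nlinarith [mul_lt_mul_of_pos_left hmain (mul_pos hσ hN)]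

theorem stmt_1 (N p : ℕ) (hN : N > 5040) (hp : p.Prime) (hpN : ¬ p ∣ N)
    (hlt : (p : ℝ) < Real.log N) :
    G N < G (N * p) :=
  stmt_1_general N p hp hpN hlt
end

section
/- Let p and x₁ be reals with p ≥ 3299, x₁ ≤ p·(1 + 1/(2(log p)²)), and let k ≥ 2 be an integer. Then x₁ · log x₁ < p · log(k·p). -/
theorem stmt_5 (p x₁ : ℝ) (k : ℕ) (hp : p ≥ 3299)
    (hx : x₁ ≤ p * (1 + 1 / (2 * (Real.log p) ^ 2))) (hk : k ≥ 2) :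
    x₁ * Real.log x₁ < p * Real.log (k * p) := by
  have hp0 : (0:ℝ) < p := by linarith
  have hk2 : (2:ℝ) ≤ (k:ℝ) := by exact_mod_cast hk
  have hk0 : (0:ℝ) < (k:ℝ) := by linarith
  set L := Real.log p with hLdef
  have hL8 : (8:ℝ) ≤ L := by
    have he : Real.exp 1 ≤ 2.72 := le_of_lt (lt_trans Real.exp_one_lt_d9 (by norm_num))
    have h8 : Real.exp 8 ≤ 3299 := by
      have : Real.exp 8 = (Real.exp 1) ^ (8:ℕ) := by
        rw [← Real.exp_nat_mul]; norm_num
      rw [this]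
      calc (Real.exp 1)^(8:ℕ) ≤ 2.72^(8:ℕ) :=
            pow_le_pow_left₀ (le_of_lt (Real.exp_pos 1)) he 8
        _ ≤ 3299 := by norm_num
    calc (8:ℝ) = Real.log (Real.exp 8) := (Real.log_exp 8).symm
      _ ≤ L := Real.log_le_log (Real.exp_pos 8) (le_trans h8 hp)
  set c : ℝ := 1 + 1 / (2 * L ^ 2) with hcdef
  have hL0 : (0:ℝ) < L := by linarith
  have hc1 : 1 < c := by
    have : 0 < 1 / (2 * L ^ 2) := by positivity
    simp [hcdef]; positivity
  have hc0 : (0:ℝ) < c := by linarith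
  have hcle : c ≤ 1 + 1/128 := by
    have h1 : (128:ℝ) ≤ 2 * L ^ 2 := by nlinarith
    have : 1 / (2 * L ^ 2) ≤ 1 / 128 := by
      apply one_div_le_one_div_of_le (by norm_num) h1
    linarith
  have hlogc : Real.log c ≤ 1/128 :=
    le_trans (Real.log_le_sub_one_of_pos hc0) (by linarith)
  have hlogc0 : 0 ≤ Real.log c := Real.log_nonneg (le_of_lt hc1)
  have hlogkp : Real.log ((k:ℝ) * p) = Real.log k + L := by
    rw [Real.log_mul (by positivity) (ne_of_gt hp0)]
  have hlogk : Real.log 2 ≤ Real.log k := Real.log_le_log (by norm_num) hk2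
  have hlog2 : (0.6931471803:ℝ) < Real.log 2 := Real.log_two_gt_d9
  have hRHS : p * (Real.log 2 + L) ≤ p * Real.log ((k:ℝ) * p) := by
    rw [hlogkp]
    apply mul_le_mul_of_nonneg_left (by linarith) (le_of_lt hp0)
  by_cases h1 : x₁ ≤ 1
  · -- LHS ≤ 1 < RHS
    have hRHSbig : (1:ℝ) < p * (Real.log 2 + L) := by nlinarith
    have hLHS : x₁ * Real.log x₁ ≤ 1 := by
      rcases lt_trichotomy x₁ 0 with hneg | hzero | hpos
      · have ht0 : (0:ℝ) < -x₁ := by linarith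
        have hlog : Real.log x₁ = Real.log (-x₁) := (Real.log_neg_eq_log x₁).symm
        have hlb : 1 - (-x₁)⁻¹ ≤ Real.log (-x₁) := Real.one_sub_inv_le_log_of_pos ht0
        have hinv : (-x₁) * (-x₁)⁻¹ = 1 := mul_inv_cancel₀ (ne_of_gt ht0)
        rw [hlog]
        nlinarith [mul_le_mul_of_nonneg_left hlb (le_of_lt ht0)]
      · simp [hzero]
      · have : Real.log x₁ ≤ 0 := Real.log_nonpos (le_of_lt hpos) h1
        nlinarith
    linarith
  · push_neg at h1
    have hx1 : x₁ ≤ p * c := hx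
    have hpc1 : (1:ℝ) < p * c := lt_of_lt_of_le h1 hx1
    have hlx : Real.log x₁ ≤ Real.log (p * c) := Real.log_le_log (by linarith) hx1
    have hlx0 : 0 ≤ Real.log x₁ := Real.log_nonneg (le_of_lt h1)
    have hLHS : x₁ * Real.log x₁ ≤ (p * c) * Real.log (p * c) := by
      apply mul_le_mul hx1 hlx hlx0 (by positivity)
    have hlogpc : Real.log (p * c) = L + Real.log c := by
      rw [Real.log_mul (ne_of_gt hp0) (ne_of_gt hc0)]
    have hstep1 : (c - 1) * L ≤ 1/16 := by
      have heq : (c - 1) * L = 1 / (2 * L) := by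
        rw [hcdef]; field_simp; ring
      rw [heq, div_le_div_iff₀ (by linarith) (by norm_num)]
      linarith
    have hstep2 : c * Real.log c ≤ (1 + 1/128) * (1/128) :=
      mul_le_mul hcle hlogc hlogc0 (by norm_num)
    have key : c * (L + Real.log c) < Real.log 2 + L := by
      have expand : c * (L + Real.log c) = (c - 1) * L + L + c * Real.log c := by ring
      rw [expand]
      have h2' : (0.6931471803:ℝ) < Real.log 2 := hlog2
      clear_value c L
      linarith
    calc x₁ * Real.log x₁ ≤ (p * c) * Real.log (p * c) := hLHS
      _ = p * (c * (L + Real.log c)) := by rw [hlogpc]; ring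
      _ < p * (Real.log 2 + L) := by
          apply mul_lt_mul_of_pos_left key hp0
      _ ≤ p * Real.log ((k:ℝ) * p) := hRHS
end

section
/- Let N be an integer and p a prime dividing N exactly once, with N/p > e. Then G(N) > G(N/p) if and only if (p+1)·(log p)·(1 + Σ_{k≥1} (1/(k+1))·(log p/log N)^k) < log N · log log N. -/
open Real

theorem hasSum_one_div_add_two_mul_pow {x : ℝ} (hx0 : x ≠ 0) (hx1 : |x| < 1) :
    HasSum (fun k : ℕ => 1 / ((k : ℝ) + 2) * x ^ (k + 1)) ((-log (1 - x) - x) / x) := by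
  have hlog := (hasSum_nat_add_iff' 1).mpr (hasSum_pow_div_log_of_abs_lt_one hx1)
  simp only [Finset.sum_range_one, pow_one, Nat.cast_zero, zero_add, div_one] at hlog
  have hterm (k : ℕ) :
      1 / ((k : ℝ) + 2) * x ^ (k + 1) = x ^ (k + 1 + 1) / ((↑(k + 1) : ℝ) + 1) / x := by
    push_cast
    field_simp
    ring
  simpa only [hterm] using hlog.div_const x

theorem one_add_tsum_one_div_add_two_mul_pow {x : ℝ} (hx0 : x ≠ 0) (hx1 : |x| < 1) :
    1 + ∑' k : ℕ, 1 / ((k : ℝ) + 2) * x ^ (k + 1) = -log (1 - x) / x := by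
  rw [(hasSum_one_div_add_two_mul_pow hx0 hx1).tsum_eq]
  field_simp
  ring

theorem log_sub_eq_log_add_log_one_sub_div {a b : ℝ} (hb : 0 < b) (hab : a < b) :
    log (b - a) = log b + log (1 - a / b) := by
  rw [← log_mul hb.ne' (sub_pos.mpr ((div_lt_one hb).mpr hab)).ne', mul_one_sub,
    mul_div_cancel₀ _ hb.ne']

theorem one_lt_log_natCast_of_log_log_pos {n : ℕ} (h : 0 < log (log n)) : 1 < log n := by
  by_contra! h'
  exact h.not_ge (log_nonpos (log_natCast_nonneg n) h')

theorem Nat.Prime.sum_divisors_mul {p M : ℕ} (hp : p.Prime) (hpM : p.Coprime M) :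
    ∑ d ∈ (p * M).divisors, (d : ℝ) = (p + 1) * ∑ d ∈ M.divisors, (d : ℝ) := by
  have := congrArg (Nat.cast : ℕ → ℝ) hpM.sum_divisors_mul
  push_cast [hp.sum_divisors] at this
  exact this

theorem G_lt_G_prime_mul_iff {p M : ℕ} (hp : p.Prime) (hpM : p.Coprime M)
    (hM : 0 < log (log M)) :
    G M < G (p * M) ↔ p * log (log (p * M)) < (p + 1) * log (log M) := by
  have hlogM := one_lt_log_natCast_of_log_log_pos hM
  have hM0 : 0 < M := Nat.pos_of_ne_zero fun h => by norm_num [h] at hlogM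
  have hp1 : (1 : ℝ) < p := by exact_mod_cast hp.one_lt
  have hlog_pM : log (log M) < log (log (p * M)) := by
    gcongr
    nlinarith [(Nat.cast_pos.mpr hM0 : (0 : ℝ) < M)]
  have hS : 0 < ∑ d ∈ M.divisors, (d : ℝ) :=
    Finset.sum_pos (fun d hd => by exact_mod_cast Nat.pos_of_mem_divisors hd)
      ⟨1, Nat.one_mem_divisors.mpr hM0.ne'⟩
  have hpM_pos : 0 < log (log (p * M)) := hM.trans hlog_pM
  unfold G
  push_cast
  rw [hp.sum_divisors_mul hpM, div_lt_div_iff₀ (by positivity) (by positivity)]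
  constructor <;> intro h <;> nlinarith [mul_pos hS (by positivity : (0 : ℝ) < M)]

theorem stmt_9 (N p : ℕ) (hp : p.Prime) (hpN : p ∣ N) (hp2 : ¬ p ^ 2 ∣ N)
    (hNp : Real.log (Real.log (N / p : ℕ)) > 0) :
    G N > G (N / p) ↔
      ((p : ℝ) + 1) * Real.log p *
          (1 + ∑' k : ℕ, (1 / ((k : ℝ) + 2)) * (Real.log p / Real.log N) ^ (k + 1)) <
        Real.log N * Real.log (Real.log N) := by
  obtain ⟨M, rfl⟩ := hpN
  have hpM : p.Coprime M :=
    hp.coprime_iff_not_dvd.mpr fun h => hp2 (by simpa [pow_two] using mul_dvd_mul_left p h)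
  rw [Nat.mul_div_cancel_left M hp.pos] at hNp ⊢
  rw [gt_iff_lt, G_lt_G_prime_mul_iff hp hpM hNp]
  have hlogM := one_lt_log_natCast_of_log_log_pos hNp
  have hlogp : 0 < log p := log_pos (by exact_mod_cast hp.one_lt)
  have hlogN : log (p * M) = log p + log M :=
    log_mul (by exact_mod_cast hp.ne_zero) fun h => by norm_num [h] at hlogM
  push_cast
  set b := log (p * M)
  set x := log p / b
  have hb : 0 < b := by linarith
  have hx : |x| < 1 :=
    abs_lt.mpr ⟨by linarith [div_pos hlogp hb], (div_lt_one hb).mpr (by linarith)⟩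
  have hlhs : (p + 1) * log p * (-log (1 - x) / x) = (p + 1) * b * (-log (1 - x)) := by
    simp only [x]
    field_simp
  rw [one_add_tsum_one_div_add_two_mul_pow (by positivity) hx, hlhs, show log M = b - log p by linarith,
    log_sub_eq_log_add_log_one_sub_div hb (by linarith)]
  constructor <;> intro h <;> nlinarith
end

section
/- Let N > 10^{10¹³} be an integer with largest prime factor p_r < log N, and suppose Σ_{p ≤ p_r} log(p/(p−1)) ≤ log log p_r + γ + 0.005586/(log p_r)². Then G(N) < e^γ + 0.00995/(log log N)², where G(n) = σ(n)/(n·log log n). -/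
/-!
Since `σ` is multiplicative and `σ(p^e) / p^e < p / (p - 1)`, `σ(N) / N` is at most the product
of `p / (p - 1)` over the primes `p ≤ p_r`, whose logarithm the Mertens hypothesis bounds by
`log u + γ + c / u²` with `u = log p_r`. This increases in `u` once `u² ≥ 2c`, so `p_r < log N`
lets `u` be replaced by `L = log log N`, giving `G(N) < e^γ · exp(c / L²)`. As `L > 20`, the last
factor is `1 + O(10⁻⁵)`, and `e^γ < 1.7812` (from `γ ≤ H₄₀ - log 40.5`, the sequence
`H_n - log (n + 1/2)` being decreasing to `γ`) turns this into the stated bound.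
-/

open Real Finset Filter Topology

lemma geom_sum_le_pow_mul_div {p : ℝ} (hp : 1 < p) (e : ℕ) :
    ∑ k ∈ range (e + 1), p ^ k ≤ p ^ e * (p / (p - 1)) := by
  have hp₁ : 0 < p - 1 := by linarith
  rw [mul_div_assoc', ← pow_succ, le_div_iff₀ hp₁, geom_sum_mul]
  linarith

lemma sum_divisors_le_mul_prod_primeFactors {n : ℕ} (hn : n ≠ 0) :
    ∑ d ∈ n.divisors, (d : ℝ) ≤ n * ∏ p ∈ n.primeFactors, (p : ℝ) / (p - 1) := by
  have hσ := congrArg (Nat.cast (R := ℝ)) (Nat.sum_divisors hn)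
  have hn' := congrArg (Nat.cast (R := ℝ)) (Nat.prod_factorization_pow_eq_self hn)
  push_cast at hσ hn'
  rw [hσ, ← hn', Finsupp.prod, Nat.support_factorization, ← prod_mul_distrib]
  refine prod_le_prod (fun _ _ ↦ by positivity) fun p hp ↦ ?_
  exact geom_sum_le_pow_mul_div (by exact_mod_cast (Nat.prime_of_mem_primeFactors hp).one_lt) _

lemma prod_primeFactors_le_exp_sum_primes_le {n m : ℕ} (hm : ∀ q ∈ n.primeFactors, q ≤ m) :
    ∏ p ∈ n.primeFactors, (p : ℝ) / (p - 1) ≤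
      exp (∑ p ∈ (range (m + 1)).filter Nat.Prime, log ((p : ℝ) / (p - 1))) := by
  have hone : ∀ p : ℕ, p.Prime → 1 ≤ (p : ℝ) / (p - 1) := fun p hp ↦ by
    have : (1 : ℝ) < p := by exact_mod_cast hp.one_lt
    rw [le_div_iff₀ (by linarith)]
    linarith
  have hpos : ∀ p ∈ n.primeFactors, 0 < (p : ℝ) / (p - 1) := fun p hp ↦
    one_pos.trans_le (hone p (Nat.prime_of_mem_primeFactors hp))
  have hsub : n.primeFactors ⊆ (range (m + 1)).filter Nat.Prime := fun q hq ↦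
    mem_filter.2 ⟨mem_range.2 (Nat.lt_succ_of_le (hm q hq)), Nat.prime_of_mem_primeFactors hq⟩
  rw [← exp_log (prod_pos hpos), log_prod fun p hp ↦ (hpos p hp).ne']
  exact exp_le_exp.2 <| sum_le_sum_of_subset_of_nonneg hsub fun p hp _ ↦
    log_nonneg (hone p (mem_filter.1 hp).2)

lemma log_add_div_sq_lt_of_lt {c u v : ℝ} (hu : 0 < u) (hcu : 2 * c ≤ u ^ 2)
    (huv : u < v) : log u + c / u ^ 2 < log v + c / v ^ 2 := by
  have hv : 0 < v := hu.trans huv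
  have hlog : log u - log v < u / v - 1 := by
    rw [← log_div hu.ne' hv.ne']
    refine log_lt_sub_one_of_pos (by positivity) ?_
    rw [Ne, div_eq_one_iff_eq hv.ne']
    exact huv.ne
  have hkey : c * (u + v) ≤ u ^ 2 * v := by nlinarith
  have hdiff : c / u ^ 2 - c / v ^ 2 ≤ 1 - u / v := by
    rw [div_sub_div _ _ (by positivity) (by positivity), one_sub_div hv.ne',
      div_le_div_iff₀ (by positivity) hv]
    nlinarith [mul_pos (sub_pos.2 huv) hv]
  linarith

lemma sum_range_le_log_sub_log {x : ℝ} (hx₀ : 0 ≤ x) (hx₁ : x < 1) (n : ℕ) :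
    ∑ k ∈ range n, 2 * (1 / (2 * k + 1)) * x ^ (2 * k + 1) ≤ log (1 + x) - log (1 - x) :=
  sum_le_hasSum _ (fun _ _ ↦ by positivity)
    (hasSum_log_sub_log_of_abs_lt_one (by rwa [abs_of_nonneg hx₀]))

lemma inv_add_one_le_log_sub_log (n : ℕ) :
    ((n : ℝ) + 1)⁻¹ ≤ log (n + 3 / 2) - log (n + 1 / 2) := by
  have hn : (0 : ℝ) < n + 1 := by positivity
  have h := sum_range_le_log_sub_log (x := 1 / (2 * (n + 1))) (by positivity)
    (by rw [div_lt_one (by positivity)]; linarith) 1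
  have hplus : 1 + 1 / (2 * ((n : ℝ) + 1)) = (n + 3 / 2) / (n + 1) := by field_simp; ring
  have hminus : 1 - 1 / (2 * ((n : ℝ) + 1)) = (n + 1 / 2) / (n + 1) := by field_simp; ring
  rw [hplus, hminus, log_div (by positivity) hn.ne', log_div (by positivity) hn.ne'] at h
  convert h using 1
  · simp only [sum_range_one, Nat.cast_zero, mul_zero, zero_add, div_one, pow_one]; field_simp
  · ring

lemma eulerMascheroniConstant_le_harmonic_sub_log_add_half (n : ℕ) :
    eulerMascheroniConstant ≤ harmonic n - log (n + 1 / 2) := by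
  have hanti : Antitone fun n : ℕ ↦ (harmonic n : ℝ) - log (n + 1 / 2) := by
    refine antitone_nat_of_succ_le fun n ↦ ?_
    have := inv_add_one_le_log_sub_log n
    push_cast [harmonic_succ]
    rw [show (n : ℝ) + 1 + 1 / 2 = n + 3 / 2 by ring]
    linarith
  have hlim : Tendsto (fun n : ℕ ↦ (harmonic n : ℝ) - log (n + 1 / 2)) atTop
      (𝓝 eulerMascheroniConstant) := by
    have hgap := (tendsto_log_comp_add_sub_log (1 / 2)).comp tendsto_natCast_atTop_atTop
    simpa [Function.comp_def] using tendsto_harmonic_sub_log.sub hgap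
  exact hanti.le_of_tendsto hlim n

lemma exp_eulerMascheroniConstant_lt : exp eulerMascheroniConstant < 1.7812 := by
  have hγ : eulerMascheroniConstant ≤
      2078178381193813 / 485721041551200 - (3 * log 2 + 4 * log (3 / 2)) := by
    have h40 : (harmonic 40 : ℝ) = 2078178381193813 / 485721041551200 := by
      norm_num [harmonic, sum_range_succ]
    have hlog : log (40 + 1 / 2) = 3 * log 2 + 4 * log (3 / 2) := by
      rw [show (40 + 1 / 2 : ℝ) = 2 ^ 3 * (3 / 2) ^ 4 by norm_num,
        log_mul (by norm_num) (by norm_num), log_pow, log_pow]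
      norm_num
    have h := eulerMascheroniConstant_le_harmonic_sub_log_add_half 40
    rwa [h40, Nat.cast_ofNat, hlog] at h
  -- `(1 + x) / (1 - x)` is `3 / 2` at `x = 1 / 5` and `1.7812` at `x = 1953 / 6953`
  have h32 : 0.405464 < log (3 / 2) := by
    have h := sum_range_le_log_sub_log (x := 1 / 5) (by norm_num) (by norm_num) 4
    rw [← log_div (by norm_num) (by norm_num)] at h
    norm_num [sum_range_succ] at h
    linarith
  have hT : 0.577284 < log 1.7812 := by
    have h := sum_range_le_log_sub_log (x := 1953 / 6953) (by norm_num) (by norm_num) 4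
    rw [← log_div (by norm_num) (by norm_num)] at h
    norm_num [sum_range_succ] at h
    linarith
  rw [← lt_log_iff_exp_lt (by norm_num)]
  linarith [log_two_gt_d9]

lemma exp_mul_exp_div_sq_le {L : ℝ} (hL : 20 ≤ L) :
    exp eulerMascheroniConstant * exp (0.005586 / L ^ 2) ≤
      exp eulerMascheroniConstant + 0.00995 / L ^ 2 := by
  set x := 0.005586 / L ^ 2 with hx
  have hx₀ : 0 ≤ x := by positivity
  have hx₁ : x ≤ 0.005586 / 400 := by
    rw [hx]; gcongr; nlinarith
  have hexp : exp x ≤ 1 + x + x ^ 2 := by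
    have := abs_exp_sub_one_sub_id_le (x := x) (by rw [abs_of_nonneg hx₀]; linarith)
    linarith [le_abs_self (exp x - 1 - x)]
  have hγ := exp_eulerMascheroniConstant_lt
  -- `4975 / 2793 ≈ 1.781239` leaves room for `exp γ < 1.7812` and `x ≤ 1.4 · 10⁻⁵`
  have : 0.00995 / L ^ 2 = 4975 / 2793 * x := by rw [hx]; ring
  rw [this]
  nlinarith [exp_pos eulerMascheroniConstant]

lemma twenty_lt_log_log {x : ℝ} (hx : 10 ^ (10 ^ 13 : ℕ) < x) : 20 < log (log x) := by
  have hlog10 : 1 < log 10 := by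
    rw [lt_log_iff_exp_lt (by norm_num)]
    linarith [exp_one_lt_d9]
  have hlogx : 10 ^ 13 * log 10 < log x := by
    have := log_lt_log (by positivity) hx
    rwa [log_pow, Nat.cast_pow, Nat.cast_ofNat] at this
  have hexp : exp 20 < 10 ^ 13 := by
    calc exp 20 = exp 1 ^ 20 := by rw [← exp_nat_mul]; norm_num
      _ < 2.7182818286 ^ 20 := by gcongr; exact exp_one_lt_d9
      _ < 10 ^ 13 := by norm_num
  rw [lt_log_iff_exp_lt (lt_trans (by positivity) hlogx)]
  nlinarith

theorem stmt_15 (N pr : ℕ) (hN : (N : ℝ) > 10 ^ (10 ^ 13 : ℕ))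
    (hpr : pr ∈ N.primeFactors) (hmax : ∀ q ∈ N.primeFactors, q ≤ pr)
    (hlt : (pr : ℝ) < Real.log N)
    (hMertens : (∑ p ∈ (Finset.range (pr + 1)).filter Nat.Prime,
        Real.log ((p : ℝ) / ((p : ℝ) - 1))) ≤
      Real.log (Real.log pr) + Real.eulerMascheroniConstant +
        0.005586 / (Real.log pr) ^ 2) :
    G N < Real.exp Real.eulerMascheroniConstant +
      0.00995 / (Real.log (Real.log N)) ^ 2 := by
  set L := log (log N)
  have hN₀ : (0 : ℝ) < N := lt_trans (by positivity) hN
  have hL : 20 < L := twenty_lt_log_log hN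
  have hpr₂ : (2 : ℝ) ≤ pr := by exact_mod_cast (Nat.prime_of_mem_primeFactors hpr).two_le
  have hlogpr : log 2 ≤ log pr := log_le_log two_pos hpr₂
  have hshift := log_add_div_sq_lt_of_lt (c := 0.005586) (lt_of_lt_of_le (by positivity) hlogpr)
    (by nlinarith [log_two_gt_d9]) (log_lt_log (by linarith) hlt)
  rw [G, div_lt_iff₀ (by positivity)]
  calc ∑ d ∈ N.divisors, (d : ℝ) ≤ N * ∏ p ∈ N.primeFactors, (p : ℝ) / (p - 1) :=
        sum_divisors_le_mul_prod_primeFactors (by exact_mod_cast hN₀.ne')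
    _ ≤ N * exp (∑ p ∈ (range (pr + 1)).filter Nat.Prime, log ((p : ℝ) / (p - 1))) := by
        gcongr; exact prod_primeFactors_le_exp_sum_primes_le hmax
    _ < N * exp (log L + eulerMascheroniConstant + 0.005586 / L ^ 2) := by
        gcongr; linarith
    _ = N * L * (exp eulerMascheroniConstant * exp (0.005586 / L ^ 2)) := by
        rw [exp_add, exp_add, exp_log (by linarith)]; ring
    _ ≤ N * L * (exp eulerMascheroniConstant + 0.00995 / L ^ 2) := by
        gcongr; exact exp_mul_exp_div_sq_le hL.le
    _ = _ := by ring
end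

section
/- Let M ≥ (log 10)·10¹³ be a real number, set C := 1 − 0.005587/log M. Then (log(C·M)) · exp(0.005586/(log(C·M))²) < log M. -/
/-!
Write `L = log M ≥ 30` and `ε = 0.005587 / L`. Then `L' = log ((1 - ε) M) = L + log (1 - ε)` lies
between `L - ε / (1 - ε)` and `L - ε`. With `δ = 0.005586 / L'²` we have `L δ ≤ ε`, because `L'` is
so close to `L` that `0.005586 L² ≤ 0.005587 L'²`; hence `L' ≤ L (1 - δ)`, and `exp δ < 1 / (1 - δ)`
gives `L' exp δ < L`.
-/

open Real

lemma mul_exp_lt_of_le_mul_one_sub {x y δ : ℝ} (hx : 0 < x) (hδ₀ : 0 < δ) (hδ₁ : δ < 1)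
    (h : x ≤ y * (1 - δ)) : x * exp δ < y := by
  have hδ : 0 < 1 - δ := by linarith
  calc x * exp δ < x * (1 / (1 - δ)) :=
        mul_lt_mul_of_pos_left (exp_bound_div_one_sub_of_interval' hδ₀ hδ₁) hx
    _ ≤ y := by rw [mul_one_div, div_le_iff₀ hδ]; exact h

lemma two_lt_log_ten : 2 < log 10 := by
  have h8 : log 8 = 3 * log 2 := by
    rw [show (8 : ℝ) = 2 ^ 3 by norm_num, log_pow]; norm_num
  have : log 8 < log 10 := log_lt_log (by norm_num) (by norm_num)
  linarith [log_two_gt_d9]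

lemma thirty_lt_log {M : ℝ} (hM : 2 * 10 ^ 13 ≤ M) : 30 < log M :=
  calc (30 : ℝ) < 44 * log 2 := by linarith [log_two_gt_d9]
    _ = log (2 ^ 44) := by rw [log_pow]; norm_num
    _ ≤ log M := log_le_log (by norm_num) (by linarith)

lemma mul_exp_div_sq_lt {L L' : ℝ} (hL : 30 ≤ L) (hlo : L - 0.000187 ≤ L')
    (hhi : L' ≤ L - 0.005587 / L) : L' * exp (0.005586 / L' ^ 2) < L := by
  have hL' : 29 ≤ L' := by linarith
  have hsq : 0 < L' ^ 2 := by positivity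
  have hδ₁ : 0.005586 / L' ^ 2 < 1 := by rw [div_lt_one hsq]; nlinarith
  have hLδ : L * (0.005586 / L' ^ 2) ≤ 0.005587 / L := by
    rw [mul_div_assoc', div_le_div_iff₀ hsq (by linarith)]
    nlinarith [sq_nonneg (L - 0.000187)]
  exact mul_exp_lt_of_le_mul_one_sub (by linarith) (by positivity) hδ₁ (by linarith)

theorem stmt_16 (M : ℝ) (hM : M ≥ Real.log 10 * 10 ^ 13) :
    Real.log ((1 - 0.005587 / Real.log M) * M) *
        Real.exp (0.005586 / (Real.log ((1 - 0.005587 / Real.log M) * M)) ^ 2) <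
      Real.log M := by
  have hM₂ : 2 * 10 ^ 13 ≤ M := by nlinarith [two_lt_log_ten]
  have hL : 30 < log M := thirty_lt_log hM₂
  set ε := 0.005587 / log M with hε
  have hε₀ : 0 < ε := by positivity
  have hε₁ : ε ≤ 0.0001863 := by rw [hε, div_le_iff₀ (by linarith)]; linarith
  have hC : 0 < 1 - ε := by linarith
  have hsplit : log ((1 - ε) * M) = log M + log (1 - ε) := by
    rw [log_mul hC.ne' (by positivity), add_comm]
  have hup : log (1 - ε) ≤ -ε := by linarith [log_le_sub_one_of_pos hC]
  have hlow : -0.000187 ≤ log (1 - ε) := by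
    have h := one_sub_inv_le_log_of_pos hC
    have : (1 - ε)⁻¹ ≤ 1.000187 := by
      rw [inv_le_comm₀ hC (by norm_num)]
      linarith [show (1.000187 : ℝ)⁻¹ ≤ 1 - 0.0001863 by norm_num]
    linarith
  rw [hsplit]
  exact mul_exp_div_sq_lt hL.le (by linarith) (by linarith)
end

section
/- For all real p ≥ 3, integers a ≥ 1, and real x ≥ p^{a+1} with x ≥ 2.3×10¹³: (1 − (a/(a+1))·(1/(1.000529²·x)))·(1 − 1/(p^{a+1}+p^a+⋯+1))·(1 + 1/x) < 1, provided p^{a+1} ≤ x. -/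
/-!
Write `c = (a/(a+1)) / 1.000529²` and `S = p^{a+1} + ⋯ + 1`. Clearing denominators, the product
`(1 - c/x)(1 - 1/S)(1 + 1/x)` is below `1` as soon as `0 < c ≤ 1`, `S > 1` and `(1 - c) S ≤ x`.
Since `a ≥ 1` gives `c ≥ 1/3`, and `p ≥ 3` gives `S < p/(p-1) · p^{a+1} ≤ (3/2) x`, the last condition
holds with room to spare.
-/

open Finset

section Ordered

variable {K : Type*}

theorem one_lt_geom_sum_range_add_two [CommRing K] [LinearOrder K] [IsStrictOrderedRing K]
    {p : K} (hp : 0 < p) (n : ℕ) : 1 < ∑ j ∈ range (n + 2), p ^ j := by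
  rw [geom_sum_succ]
  exact lt_add_of_pos_left _ (mul_pos hp (geom_sum_pos hp.le n.succ_ne_zero))

theorem two_mul_geom_sum_lt_three_mul_pow [CommRing K] [LinearOrder K] [IsStrictOrderedRing K]
    {p : K} (hp : 3 ≤ p) (n : ℕ) : 2 * ∑ j ∈ range (n + 1), p ^ j < 3 * p ^ n := by
  have h := geom_sum_mul p (n + 1)
  rw [pow_succ] at h
  nlinarith [pow_pos (by linarith : (0 : K) < p) n]

theorem one_sub_div_mul_one_sub_one_div_mul_one_add_one_div_lt_one [Field K] [LinearOrder K]
    [IsStrictOrderedRing K] {c S x : K} (hc0 : 0 < c) (hc1 : c ≤ 1) (hS : 1 < S) (hx : 0 < x)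
    (hSx : (1 - c) * S ≤ x) :
    (1 - c / x) * (1 - 1 / S) * (1 + 1 / x) < 1 := by
  have hS0 : 0 < S := by linarith
  rw [one_sub_div hx.ne', one_sub_div hS0.ne', one_add_div hx.ne', div_mul_div_comm,
    div_mul_div_comm, div_lt_one (by positivity)]
  nlinarith [mul_le_mul_of_nonneg_left hSx hx.le, mul_pos hc0 (sub_pos.2 hS),
    mul_nonneg (sub_nonneg.2 hc1) hx.le]

end Ordered

theorem stmt_19_general (p x : ℝ) (a : ℕ) (hp : p ≥ 3) (ha : 1 ≤ a)
    (hpa : p ^ (a + 1) ≤ x) :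
    (1 - ((a : ℝ) / ((a : ℝ) + 1)) * (1 / (1.000529 ^ 2 * x))) *
        (1 - 1 / (∑ j ∈ Finset.range (a + 2), p ^ j)) * (1 + 1 / x) < 1 := by
  set c : ℝ := (a : ℝ) / ((a : ℝ) + 1) / 1.000529 ^ 2
  have ha' : (1 : ℝ) ≤ a := by exact_mod_cast ha
  have hc_third : 1 / 3 ≤ c := by
    rw [le_div_iff₀ (by norm_num), le_div_iff₀ (by positivity)]
    nlinarith
  have hc1 : c ≤ 1 := by
    rw [div_le_one (by norm_num), div_le_iff₀ (by positivity)]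
    nlinarith
  have hx0 : 0 < x := (pow_pos (by linarith) _).trans_le hpa
  have hS := one_lt_geom_sum_range_add_two (by linarith : (0 : ℝ) < p) a
  have hSx : (1 - c) * ∑ j ∈ range (a + 2), p ^ j ≤ x := by
    nlinarith [two_mul_geom_sum_lt_three_mul_pow hp (a + 1)]
  have hcx : (a : ℝ) / ((a : ℝ) + 1) * (1 / (1.000529 ^ 2 * x)) = c / x := by
    simp only [c]
    ring
  rw [hcx]
  exact one_sub_div_mul_one_sub_one_div_mul_one_add_one_div_lt_one (by linarith) hc1 hS hx0 hSx

theorem stmt_19 (p x : ℝ) (a : ℕ) (hp : p ≥ 3) (ha : 1 ≤ a)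
    (hx : x ≥ 2.3e13) (hpa : p ^ (a + 1) ≤ x) :
    (1 - ((a : ℝ) / ((a : ℝ) + 1)) * (1 / (1.000529 ^ 2 * x))) *
        (1 - 1 / (∑ j ∈ Finset.range (a + 2), p ^ j)) * (1 + 1 / x) < 1 :=
  stmt_19_general p x a hp ha hpa
end
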